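/- arXiv:1501.04522 — 5 statements merged into one kernel-verified Lean document; each statement's English description precedes it below -/
import Mathlib

section
/- If L/K is an extension of fields of characteristic p > 0 such that K is existentially closed in L (every existential ring-language sentence with parameters in K true in L is true in K), then the perfect hull K^perf is existentially closed in the perfect hull L^perf. -/
/-!
Let `q` be the exponential characteristic. Given a quantifier-free formula with parameters in `Kp`
and a solution in `Lp`, pick `N` so large that the `q ^ N`-th powers of the parameters lie in `K`
and those of the solution lie in `L`. The iterated Frobenius `x ↦ x ^ q ^ N` is an injective ring
endomorphism, so it preserves quantifier-free truth: the formula with the powered parameters is a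
formula over `K` solved in `L`, hence solved in `K`, and taking `q ^ N`-th roots in the perfect
field `Kp` gives a solution of the original formula.
-/

open FirstOrder Ring Language

/-- `f : K →+* L` is existentially closed (i.e. `K` is existentially closed in `L` via `f`)
if every quantifier-free ring-language formula with parameters from `K` that has a solution
in `L` already has a solution in `K`. -/
def RingExistentiallyClosedIn {K L : Type*} [CommRing K] [CommRing L] (f : K →+* L) : Prop :=
  ∀ (n : ℕ) (φ : Language.ring.BoundedFormula K n), φ.IsQF →
    (∃ xs : Fin n → L,
      (letI := compatibleRingOfRing L; φ.Realize (fun a => f a) xs)) →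
    ∃ xs : Fin n → K,
      (letI := compatibleRingOfRing K; φ.Realize id xs)

section RingEmbedding

variable {A B : Type*} [NonAssocRing A] [NonAssocRing B] [CompatibleRing A] [CompatibleRing B]

def RingHom.toLanguageRingEmbedding (f : A →+* B) (hf : Function.Injective f) :
    Language.ring.Embedding A B where
  toFun := f
  inj' := hf
  map_fun' {_} g x := by cases g <;> simp
  map_rel' {_} r := by cases r

namespace FirstOrder.Language.BoundedFormula

variable {L : Language} {α β : Type*} {n : ℕ}

theorem IsQF.mapTermRel {L' : Language} {ft : ∀ n, L.Term (α ⊕ Fin n) → L'.Term (β ⊕ Fin n)}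
    {fr : ∀ n, L.Relations n → L'.Relations n} {φ : L.BoundedFormula α n} (h : φ.IsQF) :
    (φ.mapTermRel ft fr fun _ => id).IsQF := by
  induction h with
  | falsum => exact isQF_bot
  | of_isAtomic ha =>
    cases ha with
    | equal => exact (IsAtomic.equal _ _).isQF
    | rel => exact (IsAtomic.rel _ _).isQF
  | imp _ _ ih₁ ih₂ => exact ih₁.imp ih₂

theorem IsQF.subst {φ : L.BoundedFormula α n} (h : φ.IsQF) (tf : α → L.Term β) :
    (φ.subst tf).IsQF :=
  h.mapTermRel

theorem realize_congr_of_eqOn_freeVarFinset [DecidableEq α] {M : Type*} [L.Structure M]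
    {φ : L.BoundedFormula α n} {v v' : α → M} (h : Set.EqOn v v' φ.freeVarFinset)
    {xs : Fin n → M} : φ.Realize v xs ↔ φ.Realize v' xs := by
  rw [← realize_restrictFreeVar' subset_rfl (v := v),
    ← realize_restrictFreeVar' subset_rfl (v := v')]
  congr! 1
  exact funext fun a => h a.2

theorem IsQF.realize_iff_of_ringHom [DecidableEq α] {φ : Language.ring.BoundedFormula α n}
    (hφ : φ.IsQF) {f : A →+* B} (hf : Function.Injective f) {v : α → A} {xs : Fin n → A}
    {v' : α → B} {xs' : Fin n → B} (hv : ∀ a ∈ φ.freeVarFinset, f (v a) = v' a)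
    (hxs : ∀ i, f (xs i) = xs' i) :
    φ.Realize v' xs' ↔ φ.Realize v xs := by
  rw [← hφ.realize_embedding (f.toLanguageRingEmbedding hf),
    show xs' = f ∘ xs from (funext hxs).symm]
  exact realize_congr_of_eqOn_freeVarFinset fun a ha => (hv a ha).symm

end FirstOrder.Language.BoundedFormula

end RingEmbedding

open Filter in
theorem IsPurelyInseparable.eventually_pow_mem_range (F : Type*) {E : Type*} [Field F] [Field E]
    [Algebra F E] (q : ℕ) [ExpChar F q] [IsPurelyInseparable F E] (s : Finset E) :
    ∀ᶠ N in atTop, ∀ x ∈ s, ∃ y : F, algebraMap F E y = x ^ q ^ N := by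
  refine (eventually_all_finset s).2 fun x _ => ?_
  obtain ⟨m, y, hy⟩ := IsPurelyInseparable.pow_mem F q x
  refine eventually_atTop.2 ⟨m, fun N hN => ⟨y ^ q ^ (N - m), ?_⟩⟩
  rw [map_pow, hy, ← pow_mul, ← pow_add, Nat.add_sub_cancel' hN]

theorem exClosed_perfectHull_general
    (K L Kp Lp : Type*) [Field K] [Field L] [Field Kp] [Field Lp]
    [Algebra K L] [Algebra K Kp] [Algebra L Lp] [Algebra K Lp] [Algebra Kp Lp]
    [IsScalarTower K Kp Lp] [IsScalarTower K L Lp]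
    [PerfectField Kp]
    [IsPurelyInseparable K Kp] [IsPurelyInseparable L Lp]
    (hKL : RingExistentiallyClosedIn (algebraMap K L)) :
    RingExistentiallyClosedIn (algebraMap Kp Lp) := by
  classical
  obtain ⟨q, _⟩ := ExpChar.exists K
  have := expChar_of_injective_algebraMap (algebraMap K L).injective q
  have := expChar_of_injective_algebraMap (algebraMap K Kp).injective q
  have := expChar_of_injective_algebraMap (algebraMap K Lp).injective q
  let := compatibleRingOfRing K
  let := compatibleRingOfRing L
  let := compatibleRingOfRing Kp
  let := compatibleRingOfRing Lp
  rintro n φ hφ ⟨xs, hxs⟩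
  obtain ⟨N, hc, hys⟩ := ((IsPurelyInseparable.eventually_pow_mem_range K q φ.freeVarFinset).and
    (IsPurelyInseparable.eventually_pow_mem_range L q (Finset.univ.image xs))).exists
  choose! c hc using hc
  choose! ys hys using hys
  have hxsN : φ.Realize (fun a => algebraMap Kp Lp a ^ q ^ N) fun i => xs i ^ q ^ N :=
    (hφ.realize_iff_of_ringHom (iterateFrobenius_inj Lp q N) (fun _ _ => rfl) fun _ => rfl).2 hxs
  have hysL : φ.Realize (fun a => algebraMap K L (c a)) (ys ∘ xs) := by
    refine (hφ.realize_iff_of_ringHom (algebraMap L Lp).injective (fun a ha => ?_)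
      fun i => hys _ (Finset.mem_image_of_mem _ (Finset.mem_univ i))).1 hxsN
    rw [← IsScalarTower.algebraMap_apply, IsScalarTower.algebraMap_apply K Kp Lp, hc a ha, map_pow]
  obtain ⟨zs, hzs⟩ := hKL n (φ.subst (Term.var ∘ c)) (hφ.subst _)
    ⟨ys ∘ xs, BoundedFormula.realize_subst.2 hysL⟩
  rw [BoundedFormula.realize_subst] at hzs
  obtain ⟨ws, hws⟩ : ∃ ws : Fin n → Kp, ∀ i, algebraMap K Kp (zs i) = ws i ^ q ^ N :=
    ⟨fun i => (iterateFrobeniusEquiv Kp q N).symm (algebraMap K Kp (zs i)), fun i =>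
      ((iterateFrobeniusEquiv Kp q N).apply_symm_apply _).symm⟩
  have hwsN : φ.Realize (fun a => a ^ q ^ N) fun i => ws i ^ q ^ N :=
    (hφ.realize_iff_of_ringHom (algebraMap K Kp).injective hc hws).2 hzs
  exact ⟨ws, (hφ.realize_iff_of_ringHom (iterateFrobenius_inj Kp q N) (fun _ _ => rfl)
    fun _ => rfl).1 hwsN⟩

/-- If `L/K` is an extension of fields of characteristic `p > 0` such that `K` is existentially
closed in `L`, then the perfect hull of `K` is existentially closed in the perfect hull of `L`.
Here the perfect hulls are formalized as perfect, purely inseparable extensions `Kp/K`, `Lp/L`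
fitting into a commuting square `K ⊆ Kp ⊆ Lp`, `K ⊆ L ⊆ Lp`. -/
theorem exClosed_perfectHull (p : ℕ) (hp : p ≠ 0)
    (K L Kp Lp : Type*) [Field K] [Field L] [Field Kp] [Field Lp]
    [CharP K p]
    [Algebra K L] [Algebra K Kp] [Algebra L Lp] [Algebra K Lp] [Algebra Kp Lp]
    [IsScalarTower K Kp Lp] [IsScalarTower K L Lp]
    [PerfectField Kp] [PerfectField Lp]
    [IsPurelyInseparable K Kp] [IsPurelyInseparable L Lp]
    (hKL : RingExistentiallyClosedIn (algebraMap K L)) :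
    RingExistentiallyClosedIn (algebraMap Kp Lp) :=
  exClosed_perfectHull_general K L Kp Lp hKL
end

section
/- Let (K,v) be an equicharacteristic henselian valued field, E ⊆ Kv a subfield of the residue field, and f : E → K a partial section of the residue map (a ring embedding with res(f(a)) = a for all a ∈ E). If F/E is a separably generated subextension of Kv/E, then f extends to a partial section F → K. -/
/-!
Work with the images `S = s(D) ⊆ O` of partial sections rather than with the sections: these are
the subrings on which the residue map is injective and which contain the inverses of their
residually nonzero elements. Lifting a separating transcendence basis `T` arbitrarily, every
nonzero polynomial over `E` in the lifts has nonzero residue, hence is a unit of the local ring,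
so the substitution map extends from `E[T]` to `E(T)` and gives a first such image. Zorn's lemma
yields a maximal one above it with residues in `F`. Its residue field `D` contains `E(T)`, so
each `α ∈ F` is separable over `D`; Hensel's lemma lifts `α` to a root of the lifted minimal
polynomial, which extends the section to `D(α)`, so by maximality `α ∈ D`.
-/

open IsLocalRing Polynomial IntermediateField

theorem IsSeparable.map_of_comp_eq {L D A B : Type*} [Field L] [Field D] [Ring A]
    [Ring B] [Algebra L A] [Algebra D B] (τ : L →+* D) (ι : A →+* B)
    (h : (algebraMap D B).comp τ = ι.comp (algebraMap L A)) {a : A}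
    (ha : IsSeparable L a) :
    IsSeparable D (ι a) :=
  (Polynomial.Separable.map (f := τ) ha).of_dvd <| minpoly.dvd D (ι a) <| by
    rw [aeval_def, eval₂_map, h, ← hom_eval₂, ← aeval_def, minpoly.aeval, map_zero]

theorem isSeparable_of_adjoin_subset_subfield {k E : Type*} [Field k] [Field E] {F D : Subfield k}
    [Algebra E F] {s : Set F} (hE : ∀ e : E, (algebraMap E F e : k) ∈ D)
    (hs : ∀ i ∈ s, (i : k) ∈ D) {α : F} (hα : IsSeparable (adjoin E s) α) :
    IsSeparable D (α : k) := by
  let M : IntermediateField E F := (D.comap F.subtype).toIntermediateField hE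
  have hsM : adjoin E s ≤ M := adjoin_le_iff.mpr hs
  exact IsSeparable.map_of_comp_eq
    ((F.subtype.comp (adjoin E s).val.toRingHom).codRestrict D fun l => hsM l.2) F.subtype
    (RingHom.ext fun _ => rfl) hα

section LocalRing

variable {R : Type*} [CommRing R] [IsLocalRing R]

/-- The images of partial sections `D →+* R` of the residue map: `S` is then a field, which
`residue R` maps isomorphically onto `residueSubfield`. -/
structure IsSectionRange (S : Subring R) : Prop where
  injOn_residue : Set.InjOn (residue R) S
  exists_mul_eq_one : ∀ x ∈ S, residue R x ≠ 0 → ∃ y ∈ S, x * y = 1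

theorem isSectionRange_range {L : Type*} [Field L] (s : L →+* R) : IsSectionRange s.range where
  injOn_residue := by
    rintro _ ⟨a, rfl⟩ _ ⟨b, rfl⟩ h
    exact congrArg s (((residue R).comp s).injective h)
  exists_mul_eq_one := by
    rintro _ ⟨a, rfl⟩ ha
    have ha0 : a ≠ 0 := by rintro rfl; simp at ha
    exact ⟨s a⁻¹, ⟨a⁻¹, rfl⟩, by rw [← map_mul, mul_inv_cancel₀ ha0, map_one]⟩

namespace IsSectionRange

variable {S : Subring R}

def residueSubfield (hS : IsSectionRange S) : Subfield (ResidueField R) :=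
  { S.map (residue R) with
    inv_mem' := by
      rintro _ ⟨x, hx, rfl⟩
      by_cases hx0 : residue R x = 0
      · exact ⟨0, S.zero_mem, by simp [hx0]⟩
      obtain ⟨y, hy, hxy⟩ := hS.exists_mul_eq_one x hx hx0
      refine ⟨y, hy, ?_⟩
      exact eq_inv_of_mul_eq_one_right (by rw [← map_mul, hxy, map_one]) }

noncomputable def residueEquiv (hS : IsSectionRange S) : S ≃+* hS.residueSubfield :=
  RingEquiv.ofBijective
    (((residue R).comp S.subtype).codRestrict hS.residueSubfield fun x => ⟨x, x.2, rfl⟩)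
    ⟨fun x y h => Subtype.ext (hS.injOn_residue x.2 y.2 (congrArg Subtype.val h)),
     fun ⟨_, x, hx, hxa⟩ => ⟨⟨x, hx⟩, Subtype.ext hxa⟩⟩

noncomputable def sectionHom (hS : IsSectionRange S) : hS.residueSubfield →+* R :=
  S.subtype.comp hS.residueEquiv.symm.toRingHom

theorem residue_sectionHom (hS : IsSectionRange S) (a : hS.residueSubfield) :
    residue R (hS.sectionHom a) = a :=
  congrArg Subtype.val (hS.residueEquiv.apply_symm_apply a)

theorem sectionHom_eq (hS : IsSectionRange S) {x : R} (hx : x ∈ S) {a : hS.residueSubfield}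
    (ha : residue R x = a) : hS.sectionHom a = x := by
  obtain rfl : a = ⟨residue R x, x, hx, rfl⟩ := Subtype.ext ha.symm
  exact congrArg Subtype.val (hS.residueEquiv.symm_apply_apply ⟨x, hx⟩)

theorem sSup_of_directedOn {c : Set (Subring R)} (hne : c.Nonempty) (hc : DirectedOn (· ≤ ·) c)
    (h : ∀ S ∈ c, IsSectionRange S) : IsSectionRange (sSup c) where
  injOn_residue x hx y hy := by
    obtain ⟨S₁, h₁, hx⟩ := (Subring.mem_sSup_of_directedOn hne hc).mp hx
    obtain ⟨S₂, h₂, hy⟩ := (Subring.mem_sSup_of_directedOn hne hc).mp hy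
    obtain ⟨S, hS, h₁S, h₂S⟩ := hc _ h₁ _ h₂
    exact (h S hS).injOn_residue (h₁S hx) (h₂S hy)
  exists_mul_eq_one x hx hx0 := by
    obtain ⟨S, hS, hx⟩ := (Subring.mem_sSup_of_directedOn hne hc).mp hx
    obtain ⟨y, hy, hxy⟩ := (h S hS).exists_mul_eq_one x hx hx0
    exact ⟨y, le_sSup hS hy, hxy⟩

end IsSectionRange

theorem exists_fractionRing_lift_of_residue_injective {A : Type*} [CommRing A] [IsDomain A]
    (φ : A →+* R)    (hφ : Function.Injective ((residue R).comp φ)) :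
    ∃ Φ : FractionRing A →+* R, ∀ a, Φ (algebraMap A _ a) = φ a := by
  have hunit (b : nonZeroDivisors A) : IsUnit (φ b) :=
    (residue_ne_zero_iff_isUnit _).mp fun h =>
      nonZeroDivisors.coe_ne_zero b (hφ (by simpa using h))
  exact ⟨IsLocalization.lift hunit, IsLocalization.lift_eq hunit⟩

theorem exists_isSectionRange_of_algebraicIndependent {E : Subfield (ResidueField R)}
    (f : E →+* R) (hf : ∀ a, residue R (f a) = a) {ι : Type*} {x : ι → ResidueField R}
    (hx : AlgebraicIndependent E x) :
    ∃ S : Subring R, IsSectionRange S ∧ f.range ≤ S ∧ Set.range x ⊆ residue R '' S ∧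
      residue R '' S ⊆ Subfield.closure ((E : Set (ResidueField R)) ∪ Set.range x) := by
  choose u hu using fun i => residue_surjective (x i)
  let φ := MvPolynomial.eval₂Hom f u
  have hφ : (residue R).comp φ = MvPolynomial.aeval (R := E) x := by
    rw [MvPolynomial.comp_eval₂Hom, show (residue R).comp f = algebraMap E _ from RingHom.ext hf,
      funext hu]
    rfl
  obtain ⟨Φ, hΦ⟩ := exists_fractionRing_lift_of_residue_injective φ
    (hφ ▸ algebraicIndependent_iff_injective_aeval.mp hx)
  refine ⟨Φ.range, isSectionRange_range Φ, ?_, ?_, ?_⟩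
  · rintro _ ⟨a, rfl⟩
    exact ⟨_, (hΦ (MvPolynomial.C a)).trans (MvPolynomial.eval₂Hom_C f u a)⟩
  · rintro _ ⟨i, rfl⟩
    exact ⟨u i, ⟨_, (hΦ (MvPolynomial.X i)).trans (MvPolynomial.eval₂Hom_X' f u i)⟩, hu i⟩
  · rintro _ ⟨_, ⟨z, rfl⟩, rfl⟩
    obtain ⟨p, q, -, rfl⟩ := IsFractionRing.div_surjective (A := MvPolynomial ι E) z
    have hmem (p : MvPolynomial ι E) : (residue R).comp Φ (algebraMap _ _ p) ∈
        Subfield.closure ((E : Set (ResidueField R)) ∪ Set.range x) := by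
      rw [RingHom.comp_apply, hΦ, ← RingHom.comp_apply, hφ]
      refine MvPolynomial.eval₂_mem (fun c _ => ?_) fun i => ?_ <;> apply Subfield.subset_closure
      exacts [Or.inl (p.coeff c).2, Or.inr ⟨i, rfl⟩]
    rw [← RingHom.comp_apply, map_div₀]
    exact div_mem (hmem p) (hmem q)

end LocalRing

section Henselian

variable {R : Type*} [CommRing R] [HenselianLocalRing R]

theorem exists_extend_section_adjoin_simple {D : Subfield (ResidueField R)}
    (s : D →+* R) (hs : ∀ a, residue R (s a) = a) {α : ResidueField R} (hα : IsSeparable D α) :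
    ∃ s' : D⟮α⟯ →+* R, (∀ a, residue R (s' a) = a) ∧ ∀ a : D, s' (algebraMap D D⟮α⟯ a) = s a := by
  let := s.toAlgebra
  have aeval_map (p : D[X]) : aeval α (p.map s) = aeval α p := by
    rw [aeval_def, eval₂_map, show (algebraMap R _).comp s = algebraMap D _ from RingHom.ext hs,
      ← aeval_def]
  have hensel := ((HenselianLocalRing.TFAE R).out 0 1).mp ‹_›
  -- `α` is a simple root of the reduction of `(minpoly D α).map s`
  obtain ⟨a, ha, har⟩ : ∃ a : R, ((minpoly D α).map s).IsRoot a ∧ residue R a = α :=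
    hensel _ ((minpoly.monic hα.isIntegral).map _) α
      (by rw [aeval_map, minpoly.aeval])
      (by rw [derivative_map, aeval_map]; exact hα.aeval_derivative_ne_zero (minpoly.aeval D α))
  let pb := adjoin.powerBasis hα.isIntegral
  have hroot : aeval a (minpoly D pb.gen) = 0 := by
    rwa [adjoin.powerBasis_gen, minpoly_gen, aeval_def, ← eval_map]
  let s' := pb.lift a hroot
  let r : D⟮α⟯ →ₐ[D] ResidueField R :=
    { (residue R).comp s'.toRingHom with
      commutes' := fun d => (congrArg (residue R) (s'.commutes d)).trans (hs d) }
  have hr : r = D⟮α⟯.val := pb.algHom_ext <| by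
    change residue R (s' pb.gen) = pb.gen
    rw [pb.lift_gen, har, adjoin.powerBasis_gen, AdjoinSimple.coe_gen]
  exact ⟨s'.toRingHom, fun x => congrArg (· x) hr, s'.commutes⟩

theorem exists_isSectionRange_residueSubfield_eq (F : Subfield (ResidueField R))
    {S₀ : Subring R} (hS₀ : IsSectionRange S₀) (hS₀F : residue R '' S₀ ⊆ F)
    (hsep : ∀ D : Subfield (ResidueField R), residue R '' S₀ ⊆ D → ∀ α ∈ F, IsSeparable D α) :
    ∃ S, S₀ ≤ S ∧ ∃ hS : IsSectionRange S, hS.residueSubfield = F := by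
  let 𝒮 : Set (Subring R) := {S | IsSectionRange S ∧ residue R '' S ⊆ F}
  have hchain : ∀ c ⊆ 𝒮, IsChain (· ≤ ·) c → ∀ S ∈ c, ∃ ub ∈ 𝒮, ∀ S' ∈ c, S' ≤ ub := by
    intro c hc hchain S hS
    refine ⟨sSup c, ⟨.sSup_of_directedOn ⟨S, hS⟩ hchain.directedOn fun S hS => (hc hS).1, ?_⟩,
      fun _ => le_sSup⟩
    rw [Subring.coe_sSup_of_directedOn ⟨S, hS⟩ hchain.directedOn, Set.image_iUnion₂]
    exact Set.iUnion₂_subset fun S hS => (hc hS).2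
  obtain ⟨S, hS₀S, hmax⟩ := zorn_le_nonempty₀ 𝒮 hchain S₀ ⟨hS₀, hS₀F⟩
  obtain ⟨hS, hSF⟩ := hmax.prop
  refine ⟨S, hS₀S, hS, le_antisymm hSF fun α hα => ?_⟩
  set D := hS.residueSubfield
  obtain ⟨s, hs, hsD⟩ := exists_extend_section_adjoin_simple hS.sectionHom hS.residue_sectionHom
    (hsep D (Set.image_mono hS₀S) α hα)
  have hDαF : (D⟮α⟯ : Set (ResidueField R)) ⊆ F := by
    rw [← coe_toSubfield, adjoin_toSubfield]
    refine Subfield.closure_le.mpr (Set.union_subset ?_ (Set.singleton_subset_iff.mpr hα))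
    rintro _ ⟨d, rfl⟩
    exact hSF d.2
  have hSs : S ≤ s.range := fun x hx =>
    ⟨algebraMap D D⟮α⟯ ⟨residue R x, x, hx, rfl⟩, (hsD _).trans (hS.sectionHom_eq hx rfl)⟩
  have hsS : s.range ≤ S := hmax.2 ⟨isSectionRange_range s, by
    rintro _ ⟨_, ⟨z, rfl⟩, rfl⟩
    exact hs z ▸ hDαF z.2⟩ hSs
  exact ⟨s (AdjoinSimple.gen D α), hsS ⟨_, rfl⟩, hs _⟩

end Henselian

theorem partial_section_extends_general (K : Type*) [Field K] (O : ValuationSubring K)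
    [HenselianLocalRing ↥O]
    (E F : Subfield (ResidueField ↥O)) (hEF : E ≤ F)
    (f : ↥E →+* K)
    (hf : ∀ a : ↥E, ∃ h : f a ∈ O, residue ↥O ⟨f a, h⟩ = (a : ResidueField ↥O))
    (hsepgen : letI := (Subfield.inclusion hEF).toAlgebra
      ∃ s : Set ↥F, AlgebraicIndependent ↥E ((↑) : s → ↥F) ∧
        Algebra.IsSeparable (IntermediateField.adjoin ↥E s) ↥F) :
    ∃ g : ↥F →+* K,
      (∀ a : ↥F, ∃ h : g a ∈ O, residue ↥O ⟨g a, h⟩ = (a : ResidueField ↥O)) ∧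
      ∀ a : ↥E, g (Subfield.inclusion hEF a) = f a := by
  let := (Subfield.inclusion hEF).toAlgebra
  obtain ⟨s, hind, hsep⟩ := hsepgen
  let f₀ : E →+* O := f.codRestrict O fun a => (hf a).1
  have hf₀ (a : E) : residue O (f₀ a) = a := (hf a).2
  let x (i : s) : ResidueField O := (i : F)
  have hx : AlgebraicIndependent E x :=
    hind.map' (f := { F.subtype with commutes' := fun _ => rfl }) Subtype.val_injective
  obtain ⟨S₀, hS₀, hfS₀, hxS₀, hS₀E⟩ := exists_isSectionRange_of_algebraicIndependent f₀ hf₀ hx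
  have hED (D : Subfield (ResidueField O)) (hD : residue O '' S₀ ⊆ D) (a : E) :
      (a : ResidueField O) ∈ D := by
    simpa only [hf₀, SetLike.mem_coe] using hD ⟨_, hfS₀ ⟨a, rfl⟩, rfl⟩
  obtain ⟨S, hS₀S, hS, hSF⟩ := exists_isSectionRange_residueSubfield_eq F hS₀
    (hS₀E.trans (Subfield.closure_le.mpr (Set.union_subset hEF fun _ ⟨i, hi⟩ => hi ▸ (i : F).2)))
    -- elaborated without its expected type: unifying first the goal's `CommRing`-derived and
    -- this term's `Field`-derived `Ring` instance on the residue field times out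
    fun D hD α hα => (isSeparable_of_adjoin_subset_subfield (E := E) (s := s) (hED D hD)
      (fun i hi => hD (hxS₀ ⟨⟨i, hi⟩, rfl⟩))
      (Algebra.IsSeparable.isSeparable (adjoin E s) ⟨α, hα⟩) :)
  refine ⟨O.subtype.comp (hS.sectionHom.comp (Subfield.inclusion hSF.ge)),
    fun a => ⟨_, hS.residue_sectionHom _⟩, fun a => ?_⟩
  exact congrArg Subtype.val (hS.sectionHom_eq (hS₀S (hfS₀ ⟨a, rfl⟩)) (hf₀ a))

/-- Extension of partial sections of the residue map of an equicharacteristic henselian valued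
field along separably generated subextensions of the residue field. -/
theorem partial_section_extends (K : Type*) [Field K] (O : ValuationSubring K)
    [HenselianLocalRing ↥O]
    (hchar : ringChar K = ringChar (ResidueField ↥O))
    (E F : Subfield (ResidueField ↥O)) (hEF : E ≤ F)
    (f : ↥E →+* K)
    (hf : ∀ a : ↥E, ∃ h : f a ∈ O, residue ↥O ⟨f a, h⟩ = (a : ResidueField ↥O))
    (hsepgen : letI := (Subfield.inclusion hEF).toAlgebra
      ∃ s : Set ↥F, AlgebraicIndependent ↥E ((↑) : s → ↥F) ∧
        Algebra.IsSeparable (IntermediateField.adjoin ↥E s) ↥F) :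
    ∃ g : ↥F →+* K,
      (∀ a : ↥F, ∃ h : g a ∈ O, residue ↥O ⟨g a, h⟩ = (a : ResidueField ↥O)) ∧
      ∀ a : ↥E, g (Subfield.inclusion hEF a) = f a :=
  partial_section_extends_general K O E F hEF f hf hsepgen
end

section
/- Let (K,v) be an equicharacteristic henselian valued field and L ⊆ K a subfield on which v is trivial. Then the restriction of the residue map to the relative separable algebraic closure L₂ of L in K is an isomorphism onto the relative separable algebraic closure of Lv in Kv; in particular, the residue field of a henselian valued field contains no element separably algebraic over Lv outside L₂v. -/
/-!
Triviality of the valuation on `L` means `L ⊆ O`. Everything integral over `L` is then integral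
over the integrally closed ring `O`, so the separable closure `L₂` of `L` in `K` is a field inside
`O`, on which the residue map, a ring map out of a field, is injective. As `L → Lv` is an
isomorphism, a residue of a root of a separable polynomial over `L` is a root of a separable
polynomial over `Lv`; conversely, an element of `Kv` separable over `Lv` is a simple root of the
reduction of a separable monic polynomial over `L`, and Hensel's lemma lifts it to a root in `O`.
-/

open IsLocalRing Polynomial

theorem IsSeparable.map_algHom {A B C : Type*} [Field A] [Ring B] [Ring C] [Algebra A B]
    [Algebra A C] {x : B} (hx : IsSeparable A x) (f : B →ₐ[A] C) : IsSeparable A (f x) :=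
  hx.of_dvd (minpoly.dvd A (f x) (by rw [aeval_algHom_apply, minpoly.aeval, map_zero]))

theorem isSeparable_fieldRange_algebraMap_iff {F E : Type*} [Field F] [Field E] [Algebra F E]
    {x : E} : IsSeparable (algebraMap F E).fieldRange x ↔ IsSeparable F x := by
  let e := (algebraMap F E).rangeRestrictFieldEquiv
  have he : (algebraMap (algebraMap F E).fieldRange E).comp (e : F →+* _) =
      (RingEquiv.refl E : E →+* E).comp (algebraMap F E) := rfl
  refine ⟨IsSeparable.of_equiv_equiv e.symm (RingEquiv.refl E) ?_,
    IsSeparable.of_equiv_equiv e (RingEquiv.refl E) he⟩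
  ext a
  exact congrArg Subtype.val (e.apply_symm_apply a)

theorem HenselianLocalRing.exists_isRoot_residue_eq {R : Type*} [CommRing R]
    [HenselianLocalRing R] {p : R[X]} (hp : p.Monic) {y : ResidueField R}
    (hy : aeval y p = 0) (hy' : aeval y (derivative p) ≠ 0) :
    ∃ a : R, p.IsRoot a ∧ residue R a = y := by
  obtain ⟨a₀, rfl⟩ := residue_surjective y
  simp only [← ResidueField.algebraMap_eq, aeval_algebraMap_apply_eq_algebraMap_eval] at hy hy'
  rw [ResidueField.algebraMap_eq, residue_eq_zero_iff] at hy
  rw [ResidueField.algebraMap_eq, residue_ne_zero_iff_isUnit] at hy'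
  obtain ⟨a, ha, ha₀⟩ := HenselianLocalRing.is_henselian p hp a₀ hy hy'
  refine ⟨a, ha, ?_⟩
  rwa [← sub_eq_zero, ← map_sub, residue_eq_zero_iff]

theorem HenselianLocalRing.exists_isSeparable_residue_eq {A R : Type*} [Field A] [CommRing R]
    [HenselianLocalRing R] [Algebra A R] {y : ResidueField R} (hy : IsSeparable A y) :
    ∃ a : R, IsSeparable A a ∧ residue R a = y := by
  have hmonic : (minpoly A y).Monic := minpoly.monic hy.isIntegral
  obtain ⟨a, ha, rfl⟩ := exists_isRoot_residue_eq (hmonic.map (algebraMap A R))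
    (by rw [aeval_map_algebraMap, minpoly.aeval])
    (by rw [derivative_map, aeval_map_algebraMap]
        exact hy.aeval_derivative_ne_zero (minpoly.aeval A y))
  refine ⟨a, hy.of_dvd (minpoly.dvd A a ?_), rfl⟩
  rwa [IsRoot, eval_map_algebraMap] at ha

namespace ValuationSubring

variable {K : Type*} [Field K] (O : ValuationSubring K)

theorem mem_of_isIntegral {x : K} (hx : IsIntegral O x) : x ∈ O := by
  obtain ⟨y, rfl⟩ := IsIntegrallyClosed.isIntegral_iff.mp hx
  exact y.2

theorem eq_of_residue_eq_of_mem_subfield (F : Subfield K) (hF : (F : Set K) ⊆ O) {x₁ x₂ : K}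
    (hx₁ : x₁ ∈ F) (hx₂ : x₂ ∈ F) (h₁ : x₁ ∈ O) (h₂ : x₂ ∈ O)
    (h : residue O ⟨x₁, h₁⟩ = residue O ⟨x₂, h₂⟩) : x₁ = x₂ := by
  let φ : F →+* ResidueField O :=
    (residue O).comp (F.subtype.codRestrict O.toSubring fun x => hF x.2)
  exact congrArg Subtype.val (φ.injective (a₁ := ⟨x₁, hx₁⟩) (a₂ := ⟨x₂, hx₂⟩) h)

end ValuationSubring

theorem residue_map_iso_on_separable_closure_general (K : Type*) [Field K] (O : ValuationSubring K)
    [HenselianLocalRing ↥O]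
    (L : Subfield K)
    (htriv : ∀ a : ↥L, (a : K) ≠ 0 → ((a : K) ∈ O ∧ ((a : K))⁻¹ ∈ O)) :
    ∃ Lv : Subfield (ResidueField ↥O),
      -- `Lv` is the image of `L` under the residue map
      (∀ y : ResidueField ↥O,
        y ∈ Lv ↔ ∃ (a : ↥L) (h : (a : K) ∈ O), residue ↥O ⟨a, h⟩ = y) ∧
      -- elements of `K` separably algebraic over `L` lie in the valuation ring
      (∀ x : K, IsSeparable ↥L x → x ∈ O) ∧
      -- the residue map is injective on the separable algebraic closure of `L` in `K`
      (∀ (x₁ x₂ : K), IsSeparable ↥L x₁ → IsSeparable ↥L x₂ →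
        ∀ (h₁ : x₁ ∈ O) (h₂ : x₂ ∈ O),
          residue ↥O ⟨x₁, h₁⟩ = residue ↥O ⟨x₂, h₂⟩ → x₁ = x₂) ∧
      -- its image is exactly the separable algebraic closure of `Lv` in the residue field:
      -- residues of separably algebraic elements are separably algebraic over `Lv` ...
      (∀ (x : K) (hx : x ∈ O), IsSeparable ↥L x → IsSeparable ↥Lv (residue ↥O ⟨x, hx⟩)) ∧
      -- ... and every element of `Kv` separably algebraic over `Lv` is such a residue
      (∀ y : ResidueField ↥O, IsSeparable ↥Lv y →
        ∃ (x : K) (hx : x ∈ O), IsSeparable ↥L x ∧ residue ↥O ⟨x, hx⟩ = y) := by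
  have hL : ∀ a : L, (a : K) ∈ O := fun a =>
    (eq_or_ne (a : K) 0).elim (fun h => h ▸ O.zero_mem) fun h => (htriv a h).1
  let _ : Algebra L O := ((algebraMap L K).codRestrict O.toSubring hL).toAlgebra
  have : IsScalarTower L O K := IsScalarTower.of_algebraMap_eq fun _ => rfl
  have hmem : ∀ x : K, IsSeparable L x → x ∈ O := fun x hx =>
    O.mem_of_isIntegral hx.isIntegral.tower_top
  refine ⟨(algebraMap L (ResidueField O)).fieldRange, fun y => ?_, hmem, ?_, ?_, ?_⟩
  · exact ⟨fun ⟨a, ha⟩ => ⟨a, hL a, ha⟩, fun ⟨a, _, ha⟩ => ⟨a, ha⟩⟩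
  · intro x₁ x₂ hs₁ hs₂
    exact O.eq_of_residue_eq_of_mem_subfield (separableClosure L K).toSubfield hmem
      (mem_separableClosure_iff.mpr hs₁) (mem_separableClosure_iff.mpr hs₂)
  · intro x hx hsep
    rw [isSeparable_fieldRange_algebraMap_iff]
    have hsepO : IsSeparable L (⟨x, hx⟩ : O) :=
      (isSeparable_map_iff (IsScalarTower.toAlgHom L O K) Subtype.val_injective).mp hsep
    exact hsepO.map_algHom (IsScalarTower.toAlgHom L O (ResidueField O))
  · intro y hy
    obtain ⟨a, hsep, rfl⟩ :=
      HenselianLocalRing.exists_isSeparable_residue_eq (isSeparable_fieldRange_algebraMap_iff.mp hy)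
    exact ⟨a, a.2, hsep.map_algHom (IsScalarTower.toAlgHom L O K), rfl⟩

/-- Let `(K, O)` be an equicharacteristic henselian valued field and `L ⊆ K` a subfield on which
the valuation is trivial. Then the residue map restricts to an isomorphism (here spelled out as:
well-defined, injective, and surjective) from the relative separable algebraic closure `L₂` of
`L` in `K` onto the relative separable algebraic closure of `Lv` in the residue field `Kv`. -/
theorem residue_map_iso_on_separable_closure (K : Type*) [Field K] (O : ValuationSubring K)
    [HenselianLocalRing ↥O]
    (hchar : ringChar K = ringChar (ResidueField ↥O))
    (L : Subfield K)
    (htriv : ∀ a : ↥L, (a : K) ≠ 0 → ((a : K) ∈ O ∧ ((a : K))⁻¹ ∈ O)) :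
    ∃ Lv : Subfield (ResidueField ↥O),
      -- `Lv` is the image of `L` under the residue map
      (∀ y : ResidueField ↥O,
        y ∈ Lv ↔ ∃ (a : ↥L) (h : (a : K) ∈ O), residue ↥O ⟨a, h⟩ = y) ∧
      -- elements of `K` separably algebraic over `L` lie in the valuation ring
      (∀ x : K, IsSeparable ↥L x → x ∈ O) ∧
      -- the residue map is injective on the separable algebraic closure of `L` in `K`
      (∀ (x₁ x₂ : K), IsSeparable ↥L x₁ → IsSeparable ↥L x₂ →
        ∀ (h₁ : x₁ ∈ O) (h₂ : x₂ ∈ O),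
          residue ↥O ⟨x₁, h₁⟩ = residue ↥O ⟨x₂, h₂⟩ → x₁ = x₂) ∧
      -- its image is exactly the separable algebraic closure of `Lv` in the residue field:
      -- residues of separably algebraic elements are separably algebraic over `Lv` ...
      (∀ (x : K) (hx : x ∈ O), IsSeparable ↥L x → IsSeparable ↥Lv (residue ↥O ⟨x, hx⟩)) ∧
      -- ... and every element of `Kv` separably algebraic over `Lv` is such a residue
      (∀ y : ResidueField ↥O, IsSeparable ↥Lv y →
        ∃ (x : K) (hx : x ∈ O), IsSeparable ↥L x ∧ residue ↥O ⟨x, hx⟩ = y) :=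
  residue_map_iso_on_separable_closure_general K O L htriv
end

section
/- Let A be a complete discrete valuation ring of equal characteristic, F ⊆ A a set of representatives of the residue classes that forms a field, and s ∈ A a uniformizer. Then A is isomorphic to the formal power series ring F[[s]] by an isomorphism fixing F pointwise. -/
/-!
Evaluating power series at `s` is well defined on `F⟦X⟧` by `s`-adic completeness, as the limit of
the evaluations of truncations. Since `F` maps injectively to the residue field and `s` is not a
zero divisor, a series with value `0` has constant term `0` and is `X` times a series with value
`0`, so evaluation is injective. Since `F` meets every residue class, every `b` expands as
`∑ rₖ sᵏ` by repeatedly splitting `b = r + s b'`, so evaluation is surjective.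
-/

open IsLocalRing Polynomial

namespace PowerSeries

section AdicEval

variable {R A : Type*} [CommRing R] [CommRing A] (I : Ideal A) (φ : R →+* A) {a : A}

theorem mk_eval₂_trunc_coe (ha : a ∈ I) (n : ℕ) (p : R[X]) :
    Ideal.Quotient.mk (I ^ n) ((trunc n (p : R⟦X⟧)).eval₂ φ a) =
      Ideal.Quotient.mk (I ^ n) (p.eval₂ φ a) := by
  obtain ⟨q, hq⟩ : Polynomial.X ^ n ∣ p - trunc n (p : R⟦X⟧) :=
    Polynomial.X_pow_dvd_iff.mpr fun d hd => by simp [coeff_trunc, hd]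
  rw [Ideal.Quotient.eq, ← neg_sub, ← Polynomial.eval₂_sub, hq, Polynomial.eval₂_mul,
    Polynomial.eval₂_X_pow, neg_mem_iff]
  exact Ideal.mul_mem_right _ _ (Ideal.pow_mem_pow ha n)

/-- Multiplicative because `trunc n (f * g) ≡ trunc n f * trunc n g` modulo `X ^ n`, and
`a ^ n ∈ I ^ n`. -/
noncomputable def evalModPow (ha : a ∈ I) (n : ℕ) : R⟦X⟧ →+* A ⧸ I ^ n where
  toFun f := Ideal.Quotient.mk (I ^ n) ((trunc n f).eval₂ φ a)
  map_one' := by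
    rw [← Polynomial.coe_one, mk_eval₂_trunc_coe I φ ha, Polynomial.eval₂_one, map_one]
  map_mul' f g := by
    rw [← trunc_trunc_mul_trunc, ← Polynomial.coe_mul, mk_eval₂_trunc_coe I φ ha,
      Polynomial.eval₂_mul, map_mul]
  map_zero' := by simp
  map_add' f g := by simp [Polynomial.eval₂_add]

theorem evalModPow_apply (ha : a ∈ I) (n : ℕ) (f : R⟦X⟧) :
    evalModPow I φ ha n f = Ideal.Quotient.mk (I ^ n) ((trunc n f).eval₂ φ a) := rfl

theorem factorPow_comp_evalModPow (ha : a ∈ I) {m n : ℕ} (hmn : m ≤ n) :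
    (Ideal.Quotient.factorPow I hmn).comp (evalModPow I φ ha n) = evalModPow I φ ha m := by
  ext f
  simp only [RingHom.comp_apply, evalModPow_apply, Ideal.Quotient.factor_mk]
  rw [← mk_eval₂_trunc_coe I φ ha, trunc_trunc_of_le f hmn]

variable [IsAdicComplete I A]

/-- `f ↦ f(a)`, as the `I`-adic limit of the evaluations at `a` of the truncations of `f`. -/
noncomputable def adicEval (ha : a ∈ I) : R⟦X⟧ →+* A :=
  IsAdicComplete.liftRingHom I (evalModPow I φ ha) (factorPow_comp_evalModPow I φ ha)

theorem mk_adicEval (ha : a ∈ I) (n : ℕ) (f : R⟦X⟧) :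
    Ideal.Quotient.mk (I ^ n) (adicEval I φ ha f) =
      Ideal.Quotient.mk (I ^ n) ((trunc n f).eval₂ φ a) :=
  IsAdicComplete.mk_liftRingHom _ _ _ n f

theorem adicEval_eq_of_forall_sub_mem (ha : a ∈ I) {f : R⟦X⟧} {b : A}
    (hb : ∀ n, b - (trunc n f).eval₂ φ a ∈ I ^ n) : adicEval I φ ha f = b := by
  refine IsHausdorff.eq_iff_smodEq (I := I) |>.mpr fun n => ?_
  rw [SModEq.sub_mem, smul_eq_mul, Ideal.mul_top, ← Ideal.Quotient.eq, mk_adicEval,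
    Ideal.Quotient.eq, ← neg_sub, neg_mem_iff]
  exact hb n

theorem adicEval_coe (ha : a ∈ I) (p : R[X]) : adicEval I φ ha p = p.eval₂ φ a :=
  adicEval_eq_of_forall_sub_mem I φ ha fun n =>
    Ideal.Quotient.eq.mp (mk_eval₂_trunc_coe I φ ha n p).symm

theorem adicEval_X (ha : a ∈ I) : adicEval I φ ha X = a := by
  simpa using adicEval_coe I φ ha Polynomial.X

theorem adicEval_C (ha : a ∈ I) (r : R) : adicEval I φ ha (C r) = φ r := by
  simpa using adicEval_coe I φ ha (Polynomial.C r)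

theorem mk_adicEval_eq_mk_constantCoeff (ha : a ∈ I) (f : R⟦X⟧) :
    Ideal.Quotient.mk I (adicEval I φ ha f) = Ideal.Quotient.mk I (φ (constantCoeff f)) := by
  have h := mk_adicEval I φ ha 1 f
  rw [Ideal.Quotient.eq, pow_one, trunc_one_left, Polynomial.eval₂_C,
    coeff_zero_eq_constantCoeff_apply] at h
  rwa [Ideal.Quotient.eq]

theorem adicEval_surjective (ha : a ∈ I) (h : ∀ b : A, ∃ r : R, a ∣ b - φ r) :
    Function.Surjective (adicEval I φ ha) := by
  choose r c hc using h
  intro b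
  have hdigits : ∀ n, b - (trunc n (mk fun k => r (c^[k] b))).eval₂ φ a = a ^ n * c^[n] b := by
    intro n
    induction n with
    | zero => simp
    | succ n ih =>
      rw [eval₂_trunc_eq_sum_range, Finset.sum_range_succ, ← eval₂_trunc_eq_sum_range, coeff_mk,
        Function.iterate_succ_apply']
      linear_combination ih + a ^ n * hc (c^[n] b)
  refine ⟨mk fun k => r (c^[k] b), adicEval_eq_of_forall_sub_mem I φ ha fun n => ?_⟩
  rw [hdigits]
  exact Ideal.mul_mem_right _ _ (Ideal.pow_mem_pow ha n)

end AdicEval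

theorem injective_of_constantCoeff_eq_zero_of_mem_ker {R S : Type*} [CommRing R] [CommRing S]
    [IsDomain S] (Ψ : R⟦X⟧ →+* S) (hX : Ψ X ≠ 0)
    (h : ∀ f ∈ RingHom.ker Ψ, constantCoeff f = 0) : Function.Injective Ψ := by
  refine (injective_iff_map_eq_zero Ψ).mpr fun f hf => ext fun n => ?_
  induction n generalizing f with
  | zero => simpa using h f hf
  | succ n ih =>
    obtain ⟨g, rfl⟩ := X_dvd_iff.mpr (h f hf)
    rw [map_mul, mul_eq_zero, or_iff_right hX] at hf
    simpa [coeff_succ_X_mul] using ih g hf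

end PowerSeries

open PowerSeries in
theorem complete_dvr_iso_powerSeries_general (A : Type*) [CommRing A] [IsDomain A]
    [IsDiscreteValuationRing A] [IsAdicComplete (maximalIdeal A) A]
    (F : Subring A)
    (hrep : Function.Bijective (fun x : ↥F => residue A (x : A)))
    (s : A) (hs : Irreducible s) :
    ∃ e : A ≃+* PowerSeries ↥F,
      e s = PowerSeries.X ∧ ∀ x : ↥F, e (x : A) = PowerSeries.C (R := ↥F) x := by
  have hsm : s ∈ maximalIdeal A := hs.not_isUnit
  let Φ := adicEval (maximalIdeal A) F.subtype hsm
  have hinj : Function.Injective Φ := by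
    refine injective_of_constantCoeff_eq_zero_of_mem_ker Φ ?_ fun f hf => hrep.injective ?_
    · rw [adicEval_X]
      exact hs.ne_zero
    · have h := mk_adicEval_eq_mk_constantCoeff (maximalIdeal A) F.subtype hsm f
      rw [RingHom.mem_ker.mp hf, map_zero] at h
      simp only [ZeroMemClass.coe_zero, map_zero]
      exact h.symm
  have hsurj : Function.Surjective Φ := adicEval_surjective _ _ hsm fun b => by
    obtain ⟨x, hx⟩ := hrep.surjective (residue A b)
    refine ⟨x, ?_⟩
    rw [← Ideal.mem_span_singleton, ← hs.maximalIdeal_eq, ← residue_eq_zero_iff, map_sub]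
    exact sub_eq_zero.mpr hx.symm
  let e := RingEquiv.ofBijective Φ ⟨hinj, hsurj⟩
  exact ⟨e.symm, e.symm_apply_eq.mpr (adicEval_X _ _ hsm).symm,
    fun x => e.symm_apply_eq.mpr (adicEval_C _ F.subtype hsm x).symm⟩

/-- Let `A` be a complete discrete valuation ring of equal characteristic, `F ⊆ A` a subring
which is a field of representatives of the residue classes, and `s ∈ A` a uniformizer. Then `A`
is isomorphic to the power series ring `F[[s]]` by an isomorphism sending `s` to the variable
and fixing `F` pointwise. -/
theorem complete_dvr_iso_powerSeries (A : Type*) [CommRing A] [IsDomain A]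
    [IsDiscreteValuationRing A] [IsAdicComplete (maximalIdeal A) A]
    (hchar : ringChar A = ringChar (ResidueField A))
    (F : Subring A) (hF : IsField ↥F)
    (hrep : Function.Bijective (fun x : ↥F => residue A (x : A)))
    (s : A) (hs : Irreducible s) :
    ∃ e : A ≃+* PowerSeries ↥F,
      e s = PowerSeries.X ∧ ∀ x : ↥F, e (x : A) = PowerSeries.C (R := ↥F) x :=
  complete_dvr_iso_powerSeries_general A F hrep s hs
end

section
/- For any field F, a field of generalized power series F((Γ)) with exponents in an ordered abelian group Γ, equipped with its canonical valuation, is a maximal valued field: it admits no proper immediate extension. -/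
/-!
Fix `y ∈ L`. Since `w ∘ f = v`, the balls `B x = {X | w (f x - y) ≤ v (X - x)}` of `F((Γ))`
pairwise intersect. Hahn series are spherically complete (agreeing with each centre `x` in all
coefficients below the radius `w (f x - y)` defines a series of well-ordered support), so some `X`
lies in every `B x`. If `f X ≠ y`, immediacy gives `x` with `w (f x - (y - f X)) > w (y - f X)`,
hence `w (f x) = w (y - f X)`; but `X ∈ B (X + x)` says `v x ≥ w (f (X + x) - y) > w (y - f X)`.
-/

theorem Set.isWF_of_forall_isWF_inter_Iic {α : Type*} [Preorder α] {s : Set α}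
    (h : ∀ a ∈ s, (s ∩ Set.Iic a).IsWF) : s.IsWF := by
  rw [Set.isWF_iff_no_descending_seq]
  intro g hg hgs
  refine Set.isWF_iff_no_descending_seq.mp (h (g 0) (hgs 0)) g hg fun n => ⟨hgs n, ?_⟩
  exact hg.antitone (Nat.zero_le n)

namespace HahnSeries

variable {Γ R : Type*} [LinearOrder Γ] [AddGroup R]

theorem exists_forall_le_orderTop_sub {ι : Type*} (x : ι → R⟦Γ⟧) (d : ι → WithTop Γ)
    (hd : ∀ i j, min (d i) (d j) ≤ (x i - x j).orderTop) :
    ∃ X : R⟦Γ⟧, ∀ i, d i ≤ (X - x i).orderTop := by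
  classical
  have coeff_eq : ∀ i j (γ : Γ), ↑γ < d i → ↑γ < d j → (x j).coeff γ = (x i).coeff γ := by
    intro i j γ hi hj
    have := le_orderTop_iff_forall.mp (hd j i) γ (lt_min hj hi)
    rwa [coeff_sub, sub_eq_zero] at this
  let a : Γ → R := fun γ => if hγ : ∃ i, ↑γ < d i then (x hγ.choose).coeff γ else 0
  have ha : ∀ i (γ : Γ), ↑γ < d i → a γ = (x i).coeff γ := fun i γ hγ => by
    have hex : ∃ i, ↑γ < d i := ⟨i, hγ⟩
    simp only [a, dif_pos hex]
    exact coeff_eq i _ γ hγ hex.choose_spec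
  have hwf : (Function.support a).IsWF := by
    refine Set.isWF_of_forall_isWF_inter_Iic fun γ hγ => ?_
    obtain ⟨i, hi⟩ : ∃ i, ↑γ < d i := by
      by_contra hne
      exact hγ (dif_neg hne)
    refine (x i).isWF_support.subset fun η ⟨hη, hηγ⟩ => ?_
    have hηi : (η : WithTop Γ) < d i := (WithTop.coe_le_coe.mpr hηγ).trans_lt hi
    rwa [Function.mem_support, ha i η hηi] at hη
  refine ⟨⟨a, hwf.isPWO⟩, fun i => le_orderTop_iff_forall.mpr fun γ hγ => ?_⟩
  rw [coeff_sub, sub_eq_zero]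
  exact ha i γ hγ

end HahnSeries

namespace AddValuation

variable {Γ₀ K L : Type*} [LinearOrderedAddCommGroupWithTop Γ₀] [Semiring K] [Field L]

theorem exists_lt_map_sub_of_immediate (w : AddValuation L Γ₀) (f : K →+* L)
    (hval : ∀ y : L, y ≠ 0 → ∃ x : K, w (f x) = w y)
    (hres : ∀ y : L, 0 ≤ w y → ∃ x : K, 0 < w (f x - y)) {z : L} (hz : z ≠ 0) :
    ∃ x : K, w z < w (f x - z) := by
  obtain ⟨x₁, hx₁⟩ := hval z hz
  have hwz : w z ≠ ⊤ := w.ne_top_iff.mpr hz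
  have hfx₁ : f x₁ ≠ 0 := w.ne_top_iff.mp (hx₁ ▸ hwz)
  obtain ⟨x₂, hx₂⟩ := hres (z / f x₁) (by
    rw [w.map_div, hx₁]
    exact LinearOrderedAddCommGroupWithTop.sub_self_nonneg)
  refine ⟨x₁ * x₂, ?_⟩
  have hsplit : f (x₁ * x₂) - z = f x₁ * (f x₂ - z / f x₁) := by
    rw [f.map_mul, mul_sub, mul_div_cancel₀ z hfx₁]
  calc w z = w z + 0 := (add_zero _).symm
    _ < w z + w (f x₂ - z / f x₁) :=
      (add_lt_add_iff_right_of_ne_top hwz).mpr hx₂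
    _ = w (f (x₁ * x₂) - z) := by rw [hsplit, w.map_mul, hx₁]

end AddValuation

/-- A Hahn series field `F((Γ))` with its canonical valuation is a maximal valued field:
it admits no proper immediate extension.  Here an immediate extension is a valued field
extension `(L, w)/(F((Γ)), addVal)` (with the same value group, as the extension is
immediate) inducing isomorphisms on value groups and residue fields, and the conclusion is
that any such extension is surjective, hence not proper. -/
theorem hahnSeries_maximal (F : Type*) [Field F] (Γ : Type*) [AddCommGroup Γ] [LinearOrder Γ] [IsOrderedAddMonoid Γ]
    (L : Type*) [Field L] (w : AddValuation L (WithTop Γ))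
    (f : HahnSeries Γ F →+* L)
    -- `f` is an extension of valued fields
    (hcompat : ∀ x : HahnSeries Γ F, w (f x) = HahnSeries.addVal Γ F x)
    -- the extension is immediate: no new values ...
    (hval : ∀ y : L, y ≠ 0 → ∃ x : HahnSeries Γ F, w (f x) = w y)
    -- ... and no new residues
    (hres : ∀ y : L, 0 ≤ w y → ∃ x : HahnSeries Γ F, 0 < w (f x - y)) :
    Function.Surjective f := by
  have horderTop : ∀ x, x.orderTop = w (f x) := fun x => by
    rw [hcompat, HahnSeries.addVal_apply]
  intro y
  obtain ⟨X, hX⟩ := HahnSeries.exists_forall_le_orderTop_sub (fun x => x) (fun x => w (f x - y))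
    fun x x' => by simpa [horderTop] using w.map_sub (f x - y) (f x' - y)
  by_contra! hne
  obtain ⟨x, hx⟩ := w.exists_lt_map_sub_of_immediate f hval hres (sub_ne_zero.mpr (hne X).symm)
  have hfx : w (f x - (y - f X)) ≤ w (f x) := by
    have h := hX (X + x)
    rwa [sub_add_cancel_left, HahnSeries.orderTop_neg, horderTop, map_add,
      show f X + f x - y = f x - (y - f X) by ring] at h
  have hmin := w.map_sub (f x) (f x - (y - f X))
  rw [sub_sub_cancel] at hmin
  exact (lt_min (hx.trans_le hfx) hx).not_ge hmin
end
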